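/- arXiv:2408.02848 — 8 statements merged into one kernel-verified Lean document; each statement's English description precedes it below -/
import Mathlib

section
/- For every integer n ≥ 5, the third distance ideal of the circuit C_n equals ⟨x_0, x_1, …, x_{n−1}, n⟩: the ideal of ℤ[x_0,…,x_{n−1}] generated by the determinants of all 3×3 submatrices of D_X(C_n) equals the ideal generated by the n variables x_0,…,x_{n−1} together with the constant polynomial n. -/
open MvPolynomial

/-- The ideal generated by the determinants of all `k × k` submatrices of a square
matrix `M` (choices of `k` rows and `k` columns). -/
def minorsIdeal {R : Type*} [CommRing R] {m : Type*} (M : Matrix m m R) (k : ℕ) : Ideal R :=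
  Ideal.span { p | ∃ (r c : Fin k → m), Function.Injective r ∧ Function.Injective c ∧
    p = (M.submatrix r c).det }

/-- The matrix `D_X(C_n)` of the circuit `C_n`: the diagonal `(i,i)` entry is the
variable `x_i`, and the off-diagonal `(i,j)` entry is the constant equal to the
representative in `{0, …, n-1}` of `j - i` in `ZMod n`. -/
noncomputable def circuitDX (n : ℕ) : Matrix (ZMod n) (ZMod n) (MvPolynomial (ZMod n) ℤ) :=
  Matrix.of fun i j => if i = j then X i else C ((j - i).val : ℤ)

section Aux
variable {n : ℕ}

lemma aux_cast_inj {a b : ℕ} (ha : a < n) (hb : b < n) (h : (a : ZMod n) = b) : a = b := by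
  have := congrArg ZMod.val h
  rwa [ZMod.val_cast_of_lt ha, ZMod.val_cast_of_lt hb] at this

lemma aux_shift_ne (i : ZMod n) {k l : ℕ} (hk : k < n) (hl : l < n) (hkl : k ≠ l) :
    i + (k : ZMod n) ≠ i + (l : ZMod n) := by
  intro h
  exact hkl (aux_cast_inj hk hl (by exact add_left_cancel h))

lemma aux_self_ne_shift (i : ZMod n) {k : ℕ} (h0 : 0 < k) (hk : k < n) :
    i ≠ i + (k : ZMod n) := by
  intro h
  have : ((0:ℕ) : ZMod n) = (k : ZMod n) := by
    have := add_left_cancel (a := i) (by simpa using h)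
    simpa using this.symm
  exact absurd (aux_cast_inj (lt_of_le_of_lt (Nat.zero_le _) hk) hk this) (by omega)

lemma aux_entry_diag (i : ZMod n) : circuitDX n i i = X i := by simp [circuitDX]

lemma aux_entry_off {i j : ZMod n} (h : i ≠ j) :
    circuitDX n i j = C (((j - i).val : ℤ)) := by simp [circuitDX, h]

lemma aux_val_neg {k : ℕ} (h0 : 0 < k) (hk : k < n) :
    ((-(k : ZMod n)).val : ℤ) = (n : ℤ) - k := by
  have h1 : -(k : ZMod n) = ((n - k : ℕ) : ZMod n) := by
    have h2 : ((n : ℕ) : ZMod n) = 0 := ZMod.natCast_self n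
    push_cast [Nat.cast_sub hk.le]
    rw [h2]; ring
  rw [h1, ZMod.val_cast_of_lt (by omega)]
  push_cast [Nat.cast_sub hk.le]
  ring

lemma aux_shift_pos (i : ZMod n) {k : ℕ} (h0 : 0 < k) (hk : k < n) :
    circuitDX n i (i + (k : ZMod n)) = C (k : ℤ) := by
  rw [aux_entry_off (aux_self_ne_shift i h0 hk), add_sub_cancel_left,
    ZMod.val_cast_of_lt hk]

lemma aux_shift_neg (i : ZMod n) {k : ℕ} (h0 : 0 < k) (hk : k < n) :
    circuitDX n (i + (k : ZMod n)) i = C ((n : ℤ) - k) := by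
  rw [aux_entry_off (Ne.symm (aux_self_ne_shift i h0 hk))]
  have : i - (i + (k : ZMod n)) = -(k : ZMod n) := by ring
  rw [this, aux_val_neg h0 hk]

lemma aux_shift_two (i : ZMod n) {k l : ℕ} (hl : l < k) (hk : k < n) :
    circuitDX n (i + (k : ZMod n)) (i + (l : ZMod n)) =
      C ((n : ℤ) - k + l) := by
  rw [aux_entry_off (aux_shift_ne i hk (by omega) (by omega))]
  have h1 : (i + (l : ZMod n)) - (i + (k : ZMod n)) = -(((k - l : ℕ)) : ZMod n) := by
    push_cast [Nat.cast_sub hl.le]; ring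
  rw [h1, aux_val_neg (by omega) (by omega)]
  push_cast [Nat.cast_sub hl.le]
  ring


lemma aux_inj3 (i : ZMod n) {k l : ℕ} (h0 : 0 < k) (hkl : k < l) (hl : l < n) :
    Function.Injective ![i, i + (k : ZMod n), i + (l : ZMod n)] := by
  have e1 := aux_self_ne_shift i h0 (by omega : k < n)
  have e2 := aux_self_ne_shift i (by omega : 0 < l) hl
  have e3 := aux_shift_ne i (by omega : k < n) hl (by omega)
  intro a b hab
  fin_cases a <;> fin_cases b <;> simp_all

lemma aux_detA (i : ZMod n) (hn : 5 ≤ n) :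
    ((circuitDX n).submatrix
      ![i, i + ((3:ℕ) : ZMod n), i + ((4:ℕ) : ZMod n)]
      ![i, i + ((1:ℕ) : ZMod n), i + ((2:ℕ) : ZMod n)]).det = X i := by
  rw [Matrix.det_fin_three]
  simp only [Matrix.submatrix_apply, Matrix.cons_val_zero, Matrix.cons_val_one,
    Matrix.head_cons, Matrix.cons_val_two, Matrix.tail_cons]
  rw [aux_entry_diag,
    aux_shift_pos i (by omega) (by omega : 1 < n),
    aux_shift_pos i (by omega) (by omega : 2 < n),
    aux_shift_neg i (by omega) (by omega : 3 < n),
    aux_shift_neg i (by omega) (by omega : 4 < n),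
    aux_shift_two i (by omega : 1 < 3) (by omega : 3 < n),
    aux_shift_two i (by omega : 2 < 3) (by omega : 3 < n),
    aux_shift_two i (by omega : 1 < 4) (by omega : 4 < n),
    aux_shift_two i (by omega : 2 < 4) (by omega : 4 < n)]
  simp only [map_sub, map_add, map_ofNat, map_one, map_natCast]
  ring


lemma aux_shift_two_pos (i : ZMod n) {k l : ℕ} (hkl : k < l) (hl : l < n) :
    circuitDX n (i + (k : ZMod n)) (i + (l : ZMod n)) = C ((l - k : ℕ) : ℤ) := by
  rw [aux_entry_off (aux_shift_ne i (by omega) hl (by omega))]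
  have h1 : (i + (l : ZMod n)) - (i + (k : ZMod n)) = (((l - k : ℕ)) : ZMod n) := by
    push_cast [Nat.cast_sub hkl.le]; ring
  rw [h1, ZMod.val_cast_of_lt (by omega)]

lemma aux_detB (i : ZMod n) (hn : 5 ≤ n) :
    ((circuitDX n).submatrix
      ![i, i + ((1:ℕ) : ZMod n), i + ((2:ℕ) : ZMod n)]
      ![i, i + ((3:ℕ) : ZMod n), i + ((4:ℕ) : ZMod n)]).det = X i - C (n : ℤ) := by
  rw [Matrix.det_fin_three]
  simp only [Matrix.submatrix_apply, Matrix.cons_val_zero, Matrix.cons_val_one,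
    Matrix.head_cons, Matrix.cons_val_two, Matrix.tail_cons]
  rw [aux_entry_diag,
    aux_shift_pos i (by omega) (by omega : 3 < n),
    aux_shift_pos i (by omega) (by omega : 4 < n),
    aux_shift_neg i (by omega) (by omega : 1 < n),
    aux_shift_neg i (by omega) (by omega : 2 < n),
    aux_shift_two_pos i (by omega : 1 < 3) (by omega : 3 < n),
    aux_shift_two_pos i (by omega : 1 < 4) (by omega : 4 < n),
    aux_shift_two_pos i (by omega : 2 < 3) (by omega : 3 < n),
    aux_shift_two_pos i (by omega : 2 < 4) (by omega : 4 < n)]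
  simp only [map_sub, map_add, map_ofNat, map_one, map_natCast]
  push_cast
  ring

end Aux

theorem third_distance_ideal_circuit (n : ℕ) (hn : 5 ≤ n) :
    minorsIdeal (circuitDX n) 3 =
      Ideal.span (Set.range (X : ZMod n → MvPolynomial (ZMod n) ℤ) ∪ {C (n : ℤ)}) := by
  haveI : NeZero n := ⟨by omega⟩
  set J : Ideal (MvPolynomial (ZMod n) ℤ) :=
    Ideal.span (Set.range (X : ZMod n → MvPolynomial (ZMod n) ℤ) ∪ {C (n : ℤ)}) with hJ
  have hXJ : ∀ i : ZMod n, X i ∈ J := fun i =>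
    Ideal.subset_span (Or.inl ⟨i, rfl⟩)
  have hCJ : C ((n : ℕ) : ℤ) ∈ J := Ideal.subset_span (Or.inr rfl)
  apply le_antisymm
  · rw [minorsIdeal]
    apply Ideal.span_le.mpr
    rintro p ⟨r, c, hr, hc, rfl⟩
    have key : ∀ i j : ZMod n,
        Ideal.Quotient.mk J (circuitDX n i j) =
          Ideal.Quotient.mk J (C ((j.val : ℤ))) - Ideal.Quotient.mk J (C ((i.val : ℤ))) := by
      intro i j
      by_cases h : i = j
      · subst h
        rw [aux_entry_diag, sub_self]
        exact (Ideal.Quotient.eq_zero_iff_mem).mpr (hXJ i)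
      · rw [aux_entry_off h]
        rw [← map_sub, Ideal.Quotient.eq]
        have hd : (n : ℤ) ∣ (((j - i).val : ℤ) - ((j.val : ℤ) - (i.val : ℤ))) := by
          have : ((((j - i).val : ℤ) - ((j.val : ℤ) - (i.val : ℤ)) : ℤ) : ZMod n) = 0 := by
            push_cast
            simp [ZMod.natCast_val, ZMod.cast_id]
          exact (ZMod.intCast_zmod_eq_zero_iff_dvd _ n).mp this
        obtain ⟨u, hu⟩ := hd
        have : (C (((j - i).val : ℤ)) : MvPolynomial (ZMod n) ℤ) - (C ((j.val : ℤ)) - C ((i.val : ℤ)))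
            = C ((n : ℕ) : ℤ) * C u := by
          rw [← map_mul, ← map_sub, ← map_sub, ← hu]
        rw [this]
        exact Ideal.mul_mem_right _ _ hCJ
    have : Ideal.Quotient.mk J ((circuitDX n).submatrix r c).det = 0 := by
      rw [RingHom.map_det, Matrix.det_fin_three]
      simp only [RingHom.mapMatrix_apply, Matrix.map_apply, Matrix.submatrix_apply, key]
      ring
    exact (Ideal.Quotient.eq_zero_iff_mem).mp this
  · apply Ideal.span_le.mpr
    rintro p (⟨i, rfl⟩ | rfl)
    · exact Ideal.subset_span
        ⟨![i, i + ((3:ℕ) : ZMod n), i + ((4:ℕ) : ZMod n)],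
         ![i, i + ((1:ℕ) : ZMod n), i + ((2:ℕ) : ZMod n)],
         aux_inj3 i (by omega) (by omega) (by omega),
         aux_inj3 i (by omega) (by omega) (by omega),
         (aux_detA i hn).symm⟩
    · have hA : ((circuitDX n).submatrix
          ![(0 : ZMod n), 0 + ((3:ℕ) : ZMod n), 0 + ((4:ℕ) : ZMod n)]
          ![(0 : ZMod n), 0 + ((1:ℕ) : ZMod n), 0 + ((2:ℕ) : ZMod n)]).det
          ∈ minorsIdeal (circuitDX n) 3 :=
        Ideal.subset_span ⟨_, _, aux_inj3 0 (by omega) (by omega) (by omega),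
          aux_inj3 0 (by omega) (by omega) (by omega), rfl⟩
      have hB : ((circuitDX n).submatrix
          ![(0 : ZMod n), 0 + ((1:ℕ) : ZMod n), 0 + ((2:ℕ) : ZMod n)]
          ![(0 : ZMod n), 0 + ((3:ℕ) : ZMod n), 0 + ((4:ℕ) : ZMod n)]).det
          ∈ minorsIdeal (circuitDX n) 3 :=
        Ideal.subset_span ⟨_, _, aux_inj3 0 (by omega) (by omega) (by omega),
          aux_inj3 0 (by omega) (by omega) (by omega), rfl⟩
      have heq : (C ((n : ℕ) : ℤ) : MvPolynomial (ZMod n) ℤ)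
          = ((circuitDX n).submatrix
              ![(0 : ZMod n), 0 + ((3:ℕ) : ZMod n), 0 + ((4:ℕ) : ZMod n)]
              ![(0 : ZMod n), 0 + ((1:ℕ) : ZMod n), 0 + ((2:ℕ) : ZMod n)]).det
            - ((circuitDX n).submatrix
              ![(0 : ZMod n), 0 + ((1:ℕ) : ZMod n), 0 + ((2:ℕ) : ZMod n)]
              ![(0 : ZMod n), 0 + ((3:ℕ) : ZMod n), 0 + ((4:ℕ) : ZMod n)]).det := by
        rw [aux_detA 0 hn, aux_detB 0 hn]
        ring
      rw [heq]
      exact Ideal.sub_mem _ hA hB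
end

section
/- For every integer n ≥ 4, the second distance ideal of the circuit C_n is the unit ideal: the ideal of ℤ[x_0,…,x_{n−1}] generated by the determinants of all 2×2 submatrices of D_X(C_n) equals the whole ring. -/
open MvPolynomial

theorem second_distance_ideal_circuit_trivial (n : ℕ) (hn : 4 ≤ n) :
    minorsIdeal (circuitDX n) 2 = ⊤ := by

  have hval : ∀ k : ℕ, k < n → ((k : ZMod n)).val = k := fun k hk =>
    ZMod.val_natCast_of_lt hk
  have hv0 : ((0 : ℕ) : ZMod n).val = 0 := hval 0 (by omega)
  have hv1 : ((1 : ℕ) : ZMod n).val = 1 := hval 1 (by omega)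
  have hv2 : ((2 : ℕ) : ZMod n).val = 2 := hval 2 (by omega)
  have hv3 : ((3 : ℕ) : ZMod n).val = 3 := hval 3 (by omega)
  have h01 : ((0 : ℕ) : ZMod n) ≠ ((1 : ℕ) : ZMod n) := fun h => by
    have := congrArg ZMod.val h; rw [hv0, hv1] at this; omega
  have h02 : ((0 : ℕ) : ZMod n) ≠ ((2 : ℕ) : ZMod n) := fun h => by
    have := congrArg ZMod.val h; rw [hv0, hv2] at this; omega
  have h03 : ((0 : ℕ) : ZMod n) ≠ ((3 : ℕ) : ZMod n) := fun h => by
    have := congrArg ZMod.val h; rw [hv0, hv3] at this; omega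
  have h12 : ((1 : ℕ) : ZMod n) ≠ ((2 : ℕ) : ZMod n) := fun h => by
    have := congrArg ZMod.val h; rw [hv1, hv2] at this; omega
  have h13 : ((1 : ℕ) : ZMod n) ≠ ((3 : ℕ) : ZMod n) := fun h => by
    have := congrArg ZMod.val h; rw [hv1, hv3] at this; omega
  have h23 : ((2 : ℕ) : ZMod n) ≠ ((3 : ℕ) : ZMod n) := fun h => by
    have := congrArg ZMod.val h; rw [hv2, hv3] at this; omega
  rw [Ideal.eq_top_iff_one]
  apply Ideal.subset_span
  refine ⟨![((0:ℕ):ZMod n), ((1:ℕ):ZMod n)], ![((2:ℕ):ZMod n), ((3:ℕ):ZMod n)], ?_, ?_, ?_⟩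
  · intro a b hab
    fin_cases a <;> fin_cases b <;> simp_all
  · intro a b hab
    fin_cases a <;> fin_cases b <;> simp_all
  · have e20 : (((2:ℕ):ZMod n) - ((0:ℕ):ZMod n)).val = 2 := by push_cast; simpa using hv2
    have e30 : (((3:ℕ):ZMod n) - ((0:ℕ):ZMod n)).val = 3 := by push_cast; simpa using hv3
    have e21 : (((2:ℕ):ZMod n) - ((1:ℕ):ZMod n)).val = 1 := by
      have : ((2:ℕ):ZMod n) - ((1:ℕ):ZMod n) = ((1:ℕ):ZMod n) := by push_cast; ring
      rw [this, hv1]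
    have e31 : (((3:ℕ):ZMod n) - ((1:ℕ):ZMod n)).val = 2 := by
      have : ((3:ℕ):ZMod n) - ((1:ℕ):ZMod n) = ((2:ℕ):ZMod n) := by push_cast; ring
      rw [this, hv2]
    rw [Matrix.det_fin_two]
    simp only [Matrix.submatrix_apply, circuitDX, Matrix.of_apply, Matrix.cons_val_zero,
      Matrix.cons_val_one, Matrix.head_cons, if_neg h02, if_neg h03, if_neg h12, if_neg h13,
      e20, e30, e21, e31]
    rw [← C_mul, ← C_mul, ← C_sub]
    norm_num
end

section
/- For every integer n ≥ 5, the circuit C_n has exactly two trivial distance ideals: the ideal of ℤ[x_0,…,x_{n−1}] generated by the determinants of all 2×2 submatrices of D_X(C_n) is the unit ideal, while the ideal generated by the determinants of all 3×3 submatrices of D_X(C_n) is a proper ideal of ℤ[x_0,…,x_{n−1}]. -/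
open MvPolynomial

lemma zmod_cast_ne (n a b : ℕ) (ha : a < n) (hb : b < n) (h : a ≠ b) :
    ((a : ZMod n)) ≠ (b : ZMod n) := by
  intro hab
  have := congrArg ZMod.val hab
  rw [ZMod.val_cast_of_lt ha, ZMod.val_cast_of_lt hb] at this
  exact h this

/-- The circuit `C_n` (`n ≥ 5`) has exactly two trivial distance ideals: the second
distance ideal is the unit ideal, the third one is proper. -/
theorem circuit_exactly_two_trivial_distance_ideals (n : ℕ) (hn : 5 ≤ n) :
    minorsIdeal (circuitDX n) 2 = ⊤ ∧ minorsIdeal (circuitDX n) 3 ≠ ⊤ := by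
  haveI : NeZero n := ⟨by omega⟩
  haveI : Fact (1 < n) := ⟨by omega⟩
  -- useful numeral facts in ZMod n
  have h0 : ((0 : ℕ) : ZMod n) = 0 := by push_cast; ring
  have h1 : ((1 : ℕ) : ZMod n) = 1 := by push_cast; ring
  have h2 : ((2 : ℕ) : ZMod n) = 2 := by push_cast; ring
  have h3 : ((3 : ℕ) : ZMod n) = 3 := by push_cast; ring
  have v1 : (1 : ZMod n).val = 1 := by rw [← h1]; exact ZMod.val_cast_of_lt (by omega)
  have v2 : (2 : ZMod n).val = 2 := by rw [← h2]; exact ZMod.val_cast_of_lt (by omega)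
  have v3 : (3 : ZMod n).val = 3 := by rw [← h3]; exact ZMod.val_cast_of_lt (by omega)
  have ne01 : (0 : ZMod n) ≠ 1 := by
    rw [← h0, ← h1]; exact zmod_cast_ne n 0 1 (by omega) (by omega) (by omega)
  have ne23 : (2 : ZMod n) ≠ 3 := by
    rw [← h2, ← h3]; exact zmod_cast_ne n 2 3 (by omega) (by omega) (by omega)
  have ne02 : (0 : ZMod n) ≠ 2 := by
    rw [← h0, ← h2]; exact zmod_cast_ne n 0 2 (by omega) (by omega) (by omega)
  have ne03 : (0 : ZMod n) ≠ 3 := by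
    rw [← h0, ← h3]; exact zmod_cast_ne n 0 3 (by omega) (by omega) (by omega)
  have ne12 : (1 : ZMod n) ≠ 2 := by
    rw [← h1, ← h2]; exact zmod_cast_ne n 1 2 (by omega) (by omega) (by omega)
  have ne13 : (1 : ZMod n) ≠ 3 := by
    rw [← h1, ← h3]; exact zmod_cast_ne n 1 3 (by omega) (by omega) (by omega)
  constructor
  · -- the 2×2 minor with rows (0,1) and columns (2,3) is 1
    rw [Ideal.eq_top_iff_one]
    have hmem : ((circuitDX n).submatrix ![(0 : ZMod n), 1] ![(2 : ZMod n), 3]).det ∈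
        minorsIdeal (circuitDX n) 2 := by
      apply Ideal.subset_span
      refine ⟨![(0 : ZMod n), 1], ![(2 : ZMod n), 3], ?_, ?_, rfl⟩
      · intro a b hab
        fin_cases a <;> fin_cases b <;> simp_all
      · intro a b hab
        fin_cases a <;> fin_cases b <;> simp_all
    have hdet : ((circuitDX n).submatrix ![(0 : ZMod n), 1] ![(2 : ZMod n), 3]).det = 1 := by
      rw [Matrix.det_fin_two]
      simp only [Matrix.submatrix_apply, circuitDX, Matrix.of_apply, Matrix.cons_val_zero,
        Matrix.cons_val_one, Matrix.head_cons]
      rw [if_neg ne02, if_neg ne03, if_neg ne12, if_neg ne13]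
      have e1 : (2 - 0 : ZMod n) = 2 := by ring
      have e2 : (3 - 0 : ZMod n) = 3 := by ring
      have e3 : (2 - 1 : ZMod n) = 1 := by ring
      have e4 : (3 - 1 : ZMod n) = 2 := by ring
      rw [e1, e2, e3, e4, v1, v2, v3]
      rw [← C_mul, ← C_mul, ← C_sub]
      norm_num
    rwa [hdet] at hmem
  · -- evaluate all variables at 0 over ZMod n; every entry becomes j - i
    intro htop
    set φ : MvPolynomial (ZMod n) ℤ →+* ZMod n :=
      eval₂Hom (Int.castRingHom (ZMod n)) (fun _ => 0) with hφ
    have hker : minorsIdeal (circuitDX n) 3 ≤ RingHom.ker φ := by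
      rw [minorsIdeal, Ideal.span_le]
      rintro p ⟨r, c, -, -, rfl⟩
      have hmap : ((circuitDX n).submatrix r c).map φ =
          Matrix.of (fun s t : Fin 3 => (c t : ZMod n) - r s) := by
        ext s t
        simp only [Matrix.map_apply, Matrix.submatrix_apply, circuitDX, Matrix.of_apply]
        by_cases h : r s = c t
        · rw [if_pos h, h]
          simp [hφ]
        · rw [if_neg h]
          simp only [hφ, eval₂Hom_C, Int.coe_castRingHom]
          push_cast
          rw [ZMod.natCast_val, ZMod.cast_id]
      have : φ ((circuitDX n).submatrix r c).det = (((circuitDX n).submatrix r c).map φ).det :=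
        (RingHom.map_det φ _)
      rw [SetLike.mem_coe, RingHom.mem_ker, this, hmap, Matrix.det_fin_three]
      simp only [Matrix.of_apply]
      ring
    rw [htop, top_le_iff] at hker
    have : φ 1 = 0 := by
      have : (1 : MvPolynomial (ZMod n) ℤ) ∈ RingHom.ker φ := by rw [hker]; trivial
      rwa [RingHom.mem_ker] at this
    rw [map_one] at this
    exact one_ne_zero this
end

section
/- Let a, b, c, d ≥ 1 be integers, n = a+b+c+d, and R = ℤ[x_1,…,x_{a+c}, y_1,…,y_{b+d}]. Let M be the n×n matrix over R, the distance matrix with diagonal variables of the strong digraph Λ(a,b,c,d), with rows and columns indexed by the disjoint union K_a ⊔ K_c ⊔ T_b ⊔ T_d, defined by: the diagonal entries on K_a ⊔ K_c are the variables x_1,…,x_{a+c} and on T_b ⊔ T_d are y_1,…,y_{b+d}; off-diagonal entries within K_a are 1, within K_c are 1, within T_b are 2, within T_d are 2; entries from K_a to K_c are 2, from K_a to T_b are 1, from K_a to T_d are 2; from K_c to K_a are 2, from K_c to T_b are 2, from K_c to T_d are 1; from T_b to K_a are 2, from T_b to K_c are 1, from T_b to T_d are 1; from T_d to K_a are 1,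 from T_d to K_c are 2, from T_d to T_b are 1. Then the ideal of R generated by the determinants of all 2×2 submatrices of M equals the ideal ⟨3, x_1 − 1, …, x_{a+c} − 1, y_1 − 2, …, y_{b+d} − 2⟩; in particular, this ideal is a proper ideal of R. -/
open MvPolynomial

/-- The matrix `D_X(Λ(a,b,c,d))`, with rows and columns indexed by
`K_a ⊔ K_c ⊔ T_b ⊔ T_d`, diagonal variables `x_1, …, x_{a+c}` on `K_a ⊔ K_c` and
`y_1, …, y_{b+d}` on `T_b ⊔ T_d`. -/
noncomputable def lambdaDX (a b c d : ℕ) :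
    Matrix ((Fin a ⊕ Fin c) ⊕ (Fin b ⊕ Fin d)) ((Fin a ⊕ Fin c) ⊕ (Fin b ⊕ Fin d))
      (MvPolynomial (Fin (a + c) ⊕ Fin (b + d)) ℤ) :=
  Matrix.of fun p q =>
    match p, q with
    | .inl (.inl i), .inl (.inl j) => if i = j then X (.inl (Fin.castAdd c i)) else 1
    | .inl (.inl _), .inl (.inr _) => 2
    | .inl (.inl _), .inr (.inl _) => 1
    | .inl (.inl _), .inr (.inr _) => 2
    | .inl (.inr _), .inl (.inl _) => 2
    | .inl (.inr i), .inl (.inr j) => if i = j then X (.inl (Fin.natAdd a i)) else 1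
    | .inl (.inr _), .inr (.inl _) => 2
    | .inl (.inr _), .inr (.inr _) => 1
    | .inr (.inl _), .inl (.inl _) => 2
    | .inr (.inl _), .inl (.inr _) => 1
    | .inr (.inl i), .inr (.inl j) => if i = j then X (.inr (Fin.castAdd d i)) else 2
    | .inr (.inl _), .inr (.inr _) => 1
    | .inr (.inr _), .inl (.inl _) => 1
    | .inr (.inr _), .inl (.inr _) => 2
    | .inr (.inr _), .inr (.inl _) => 1
    | .inr (.inr i), .inr (.inr j) => if i = j then X (.inr (Fin.natAdd b i)) else 2

/-- Integer "approximation" of `lambdaDX`, obtained by substituting `x ↦ 1`, `y ↦ 2`. -/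
def lamN (a b c d : ℕ) :
    ((Fin a ⊕ Fin c) ⊕ (Fin b ⊕ Fin d)) → ((Fin a ⊕ Fin c) ⊕ (Fin b ⊕ Fin d)) → ℤ :=
  fun p q => match p, q with
  | .inl (.inl _), .inl (.inl _) => 1
  | .inl (.inl _), .inl (.inr _) => 2
  | .inl (.inl _), .inr (.inl _) => 1
  | .inl (.inl _), .inr (.inr _) => 2
  | .inl (.inr _), .inl (.inl _) => 2
  | .inl (.inr _), .inl (.inr _) => 1
  | .inl (.inr _), .inr (.inl _) => 2
  | .inl (.inr _), .inr (.inr _) => 1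
  | .inr (.inl _), .inl (.inl _) => 2
  | .inr (.inl _), .inl (.inr _) => 1
  | .inr (.inl _), .inr (.inl _) => 2
  | .inr (.inl _), .inr (.inr _) => 1
  | .inr (.inr _), .inl (.inl _) => 1
  | .inr (.inr _), .inl (.inr _) => 2
  | .inr (.inr _), .inr (.inl _) => 1
  | .inr (.inr _), .inr (.inr _) => 2

def lamU (a b c d : ℕ) : ((Fin a ⊕ Fin c) ⊕ (Fin b ⊕ Fin d)) → ℤ
  | .inl (.inl _) => 1
  | .inl (.inr _) => 2
  | .inr (.inl _) => 2
  | .inr (.inr _) => 1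

def lamV (a b c d : ℕ) : ((Fin a ⊕ Fin c) ⊕ (Fin b ⊕ Fin d)) → ℤ
  | .inl (.inl _) => 1
  | .inl (.inr _) => 2
  | .inr (.inl _) => 1
  | .inr (.inr _) => 2

lemma lamN_modEq (a b c d : ℕ) (p q : (Fin a ⊕ Fin c) ⊕ (Fin b ⊕ Fin d)) :
    lamN a b c d p q ≡ lamU a b c d p * lamV a b c d q [ZMOD 3] := by
  rcases p with (p | p) | (p | p) <;> rcases q with (q | q) | (q | q) <;>
    simp only [lamN, lamU, lamV] <;> decide

lemma lamN_minor_dvd (a b c d : ℕ)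
    (p p' q q' : (Fin a ⊕ Fin c) ⊕ (Fin b ⊕ Fin d)) :
    (3 : ℤ) ∣ lamN a b c d p q * lamN a b c d p' q' -
      lamN a b c d p q' * lamN a b c d p' q := by
  have h := ((lamN_modEq a b c d p q).mul (lamN_modEq a b c d p' q')).sub
    ((lamN_modEq a b c d p q').mul (lamN_modEq a b c d p' q))
  have h0 : lamU a b c d p * lamV a b c d q * (lamU a b c d p' * lamV a b c d q') -
      lamU a b c d p * lamV a b c d q' * (lamU a b c d p' * lamV a b c d q) = 0 := by ring
  rw [h0] at h
  exact (Int.modEq_zero_iff_dvd).mp h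

lemma inj_pair {α : Type*} {p q : α} (h : p ≠ q) : Function.Injective ![p, q] := by
  intro i j hij
  fin_cases i <;> fin_cases j <;> simp_all

theorem second_distance_ideal_lambda (a b c d : ℕ)
    (ha : 1 ≤ a) (hb : 1 ≤ b) (hc : 1 ≤ c) (hd : 1 ≤ d) :
    minorsIdeal (lambdaDX a b c d) 2 =
      Ideal.span
        ({C 3} ∪
          (Set.range fun i : Fin (a + c) =>
            (X (Sum.inl i) - C 1 : MvPolynomial (Fin (a + c) ⊕ Fin (b + d)) ℤ)) ∪
          (Set.range fun j : Fin (b + d) =>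
            (X (Sum.inr j) - C 2 : MvPolynomial (Fin (a + c) ⊕ Fin (b + d)) ℤ))) ∧
    minorsIdeal (lambdaDX a b c d) 2 ≠ ⊤ := by
  set R := MvPolynomial (Fin (a + c) ⊕ Fin (b + d)) ℤ
  set J : Ideal R := Ideal.span
        ({C 3} ∪
          (Set.range fun i : Fin (a + c) =>
            (X (Sum.inl i) - C 1 : R)) ∪
          (Set.range fun j : Fin (b + d) =>
            (X (Sum.inr j) - C 2 : R))) with hJ
  have hgen3 : (C 3 : R) ∈ J := Ideal.subset_span (Or.inl (Or.inl rfl))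
  have hgenX : ∀ i : Fin (a + c), (X (Sum.inl i) - C 1 : R) ∈ J := fun i =>
    Ideal.subset_span (Or.inl (Or.inr ⟨i, rfl⟩))
  have hgenY : ∀ j : Fin (b + d), (X (Sum.inr j) - C 2 : R) ∈ J := fun j =>
    Ideal.subset_span (Or.inr ⟨j, rfl⟩)
  have hmain : minorsIdeal (lambdaDX a b c d) 2 = J := by
    apply le_antisymm
    · rw [minorsIdeal, Ideal.span_le]
      rintro p ⟨r, c', -, -, rfl⟩
      have hent : ∀ p q, lambdaDX a b c d p q - C (lamN a b c d p q) ∈ J := by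
        rintro ((p | p) | (p | p)) ((q | q) | (q | q)) <;>
          simp only [lambdaDX, lamN, Matrix.of_apply]
        · split_ifs with h
          · exact hgenX _
          · simp
        · simp
        · simp
        · simp
        · simp
        · split_ifs with h
          · exact hgenX _
          · simp
        · simp
        · simp
        · simp
        · simp
        · split_ifs with h
          · exact hgenY _
          · simp
        · simp
        · simp
        · simp
        · simp
        · split_ifs with h
          · exact hgenY _
          · simp
      obtain ⟨k, hk⟩ := lamN_minor_dvd a b c d (r 0) (r 1) (c' 0) (c' 1)
      have hconst : (C (lamN a b c d (r 0) (c' 0)) * C (lamN a b c d (r 1) (c' 1)) -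
          C (lamN a b c d (r 0) (c' 1)) * C (lamN a b c d (r 1) (c' 0)) : R) ∈ J := by
        rw [← map_mul, ← map_mul, ← map_sub, hk, map_mul]
        exact Ideal.mul_mem_right _ _ hgen3
      have key : ((lambdaDX a b c d).submatrix r c').det =
          ((lambdaDX a b c d (r 0) (c' 0) - C (lamN a b c d (r 0) (c' 0))) *
              lambdaDX a b c d (r 1) (c' 1) +
            C (lamN a b c d (r 0) (c' 0)) *
              (lambdaDX a b c d (r 1) (c' 1) - C (lamN a b c d (r 1) (c' 1))) -
            ((lambdaDX a b c d (r 0) (c' 1) - C (lamN a b c d (r 0) (c' 1))) *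
                lambdaDX a b c d (r 1) (c' 0) +
              C (lamN a b c d (r 0) (c' 1)) *
                (lambdaDX a b c d (r 1) (c' 0) - C (lamN a b c d (r 1) (c' 0))))) +
          (C (lamN a b c d (r 0) (c' 0)) * C (lamN a b c d (r 1) (c' 1)) -
            C (lamN a b c d (r 0) (c' 1)) * C (lamN a b c d (r 1) (c' 0))) := by
        rw [Matrix.det_fin_two]
        simp only [Matrix.submatrix_apply]
        ring
      rw [key]
      exact add_mem
        (sub_mem
          (add_mem (Ideal.mul_mem_right _ _ (hent _ _)) (Ideal.mul_mem_left _ _ (hent _ _)))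
          (add_mem (Ideal.mul_mem_right _ _ (hent _ _)) (Ideal.mul_mem_left _ _ (hent _ _))))
        hconst
    · rw [hJ, Ideal.span_le]
      rintro p ((rfl | ⟨i, rfl⟩) | ⟨j, rfl⟩)
      · -- C 3
        have hdet : ((lambdaDX a b c d).submatrix
            ![Sum.inl (Sum.inl ⟨0, ha⟩), Sum.inl (Sum.inr ⟨0, hc⟩)]
            ![Sum.inr (Sum.inl ⟨0, hb⟩), Sum.inr (Sum.inr ⟨0, hd⟩)]).det = -(C 3 : R) := by
          rw [Matrix.det_fin_two]
          simp [lambdaDX]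
          ring
        have hmem : (-(C 3 : R)) ∈ minorsIdeal (lambdaDX a b c d) 2 := by
          rw [← hdet]
          exact Ideal.subset_span ⟨_, _, inj_pair (by simp), inj_pair (by simp), rfl⟩
        simpa using neg_mem hmem
      · -- X (inl i) - C 1
        show (X (Sum.inl i) - C 1 : R) ∈ minorsIdeal (lambdaDX a b c d) 2
        by_cases h : (i : ℕ) < a
        · have hi : i = Fin.castAdd c ⟨i, h⟩ := Fin.ext rfl
          have hdet : ((lambdaDX a b c d).submatrix
              ![Sum.inl (Sum.inl ⟨i, h⟩), Sum.inr (Sum.inr ⟨0, hd⟩)]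
              ![Sum.inl (Sum.inl ⟨i, h⟩), Sum.inr (Sum.inl ⟨0, hb⟩)]).det =
              X (Sum.inl i) - C 1 := by
            rw [Matrix.det_fin_two]
            simp [lambdaDX, ← hi]
          rw [← hdet]
          exact Ideal.subset_span ⟨_, _, inj_pair (by simp), inj_pair (by simp), rfl⟩
        · have h' : (i : ℕ) - a < c := by omega
          have hi : i = Fin.natAdd a ⟨(i : ℕ) - a, h'⟩ := Fin.ext (by simp; omega)
          have hdet : ((lambdaDX a b c d).submatrix
              ![Sum.inl (Sum.inr ⟨(i : ℕ) - a, h'⟩), Sum.inr (Sum.inl ⟨0, hb⟩)]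
              ![Sum.inl (Sum.inr ⟨(i : ℕ) - a, h'⟩), Sum.inr (Sum.inr ⟨0, hd⟩)]).det =
              X (Sum.inl i) - C 1 := by
            rw [Matrix.det_fin_two]
            simp [lambdaDX, ← hi]
          rw [← hdet]
          exact Ideal.subset_span ⟨_, _, inj_pair (by simp), inj_pair (by simp), rfl⟩
      · -- X (inr j) - C 2
        show (X (Sum.inr j) - C 2 : R) ∈ minorsIdeal (lambdaDX a b c d) 2
        by_cases h : (j : ℕ) < b
        · have hj : j = Fin.castAdd d ⟨j, h⟩ := Fin.ext rfl
          have hdet : ((lambdaDX a b c d).submatrix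
              ![Sum.inr (Sum.inl ⟨j, h⟩), Sum.inl (Sum.inr ⟨0, hc⟩)]
              ![Sum.inr (Sum.inl ⟨j, h⟩), Sum.inr (Sum.inr ⟨0, hd⟩)]).det =
              X (Sum.inr j) - C 2 := by
            rw [Matrix.det_fin_two]
            simp [lambdaDX, ← hj]
          rw [← hdet]
          exact Ideal.subset_span ⟨_, _, inj_pair (by simp), inj_pair (by simp), rfl⟩
        · have h' : (j : ℕ) - b < d := by omega
          have hj : j = Fin.natAdd b ⟨(j : ℕ) - b, h'⟩ := Fin.ext (by simp; omega)
          have hdet : ((lambdaDX a b c d).submatrix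
              ![Sum.inr (Sum.inr ⟨(j : ℕ) - b, h'⟩), Sum.inl (Sum.inl ⟨0, ha⟩)]
              ![Sum.inr (Sum.inr ⟨(j : ℕ) - b, h'⟩), Sum.inr (Sum.inl ⟨0, hb⟩)]).det =
              X (Sum.inr j) - C 2 := by
            rw [Matrix.det_fin_two]
            simp [lambdaDX, ← hj]
          rw [← hdet]
          exact Ideal.subset_span ⟨_, _, inj_pair (by simp), inj_pair (by simp), rfl⟩
  refine ⟨hmain, ?_⟩
  rw [hmain]
  -- J ≠ ⊤ via evaluation to ZMod 3
  set φ : R →+* ZMod 3 := (eval₂Hom (Int.castRingHom (ZMod 3))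
    (Sum.elim (fun _ => 1) (fun _ => 2)) : R →+* ZMod 3) with hφ
  have hle : J ≤ RingHom.ker φ := by
    rw [hJ, Ideal.span_le]
    rintro p ((rfl | ⟨i, rfl⟩) | ⟨j, rfl⟩)
    · show (C 3 : R) ∈ RingHom.ker φ
      rw [RingHom.mem_ker, hφ, eval₂Hom_C]
      decide
    · show (X (Sum.inl i) - C 1 : R) ∈ RingHom.ker φ
      rw [RingHom.mem_ker, hφ, map_sub, eval₂Hom_X', eval₂Hom_C, Sum.elim_inl]
      decide
    · show (X (Sum.inr j) - C 2 : R) ∈ RingHom.ker φ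
      rw [RingHom.mem_ker, hφ, map_sub, eval₂Hom_X', eval₂Hom_C, Sum.elim_inr]
      decide
  intro htop
  have h1 : (1 : R) ∈ J := htop ▸ Submodule.mem_top
  have := hle h1
  rw [RingHom.mem_ker, map_one] at this
  exact one_ne_zero this
end

section
/- Let a ≥ 0 and b ≥ 2 be integers and n = a+b+1. Let D(Λ(a,b,0,1)) be the n×n integer matrix with rows and columns indexed by K ⊔ T ⊔ {*} (|K| = a, |T| = b), with all diagonal entries 0 and off-diagonal entries: 1 between two distinct K-indices, 1 from a K-index to a T-index, 2 from a K-index to *, 2 from a T-index to a K-index, 2 between two distinct T-indices, 1 from a T-index to *, and 1 from * to every K-index and every T-index. Then D(Λ(a,b,0,1)) is equivalent over ℤ to the diagonal matrix with a+2 diagonal entries equal to 1, followed by b−2 diagonal entries equal to 2, followed by one diagonal entry equal to 8a + 2b. -/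
set_option linter.unreachableTactic false
set_option linter.unusedTactic false


/-- Two square integer matrices are equivalent over ℤ if one is obtained from the
other by multiplying on the left and right by matrices invertible over ℤ. -/
def IntEquiv {m : Type*} [Fintype m] [DecidableEq m] (M N : Matrix m m ℤ) : Prop :=
  ∃ P Q : Matrix m m ℤ, IsUnit P.det ∧ IsUnit Q.det ∧ P * M * Q = N

/-- The distance matrix `D(Λ(a,b,0,1))`, with rows and columns indexed by
`K ⊔ T ⊔ {*}`: indices `< a` form `K`, indices in `[a, a+b)` form `T`, and the last
index is `*`. -/
def lambdaD (a b : ℕ) : Matrix (Fin (a + b + 1)) (Fin (a + b + 1)) ℤ :=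
  Matrix.of fun i j =>
    if i = j then 0
    else if i.val < a then (if j.val < a then 1 else if j.val < a + b then 1 else 2)
    else if i.val < a + b then (if j.val < a then 2 else if j.val < a + b then 2 else 1)
    else 1


namespace SnfAux

/-- Index type: `K ⊔ (t₁ ⊔ (t₂ ⊔ T'')) ⊔ {*}` where `b = 1 + (1 + c)`. -/
abbrev Idx (a c : ℕ) : Type := (Fin a ⊕ (Fin 1 ⊕ (Fin 1 ⊕ Fin c))) ⊕ Fin 1

def eIdx (a c : ℕ) : Idx a c ≃ Fin (a + (1 + (1 + c)) + 1) :=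
  (Equiv.sumCongr
    ((Equiv.sumCongr (Equiv.refl (Fin a))
      ((Equiv.sumCongr (Equiv.refl (Fin 1)) finSumFinEquiv).trans finSumFinEquiv)).trans
        finSumFinEquiv)
    (Equiv.refl (Fin 1))).trans finSumFinEquiv

@[simp] lemma eIdx_K (a c : ℕ) (k : Fin a) :
    ((eIdx a c (.inl (.inl k))) : ℕ) = k := by
  simp [eIdx]

@[simp] lemma eIdx_t1 (a c : ℕ) (z : Fin 1) :
    ((eIdx a c (.inl (.inr (.inl z)))) : ℕ) = a := by
  simp [eIdx, Fin.val_eq_zero]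

@[simp] lemma eIdx_t2 (a c : ℕ) (z : Fin 1) :
    ((eIdx a c (.inl (.inr (.inr (.inl z))))) : ℕ) = a + 1 := by
  simp [eIdx, Fin.val_eq_zero]

@[simp] lemma eIdx_T (a c : ℕ) (t : Fin c) :
    ((eIdx a c (.inl (.inr (.inr (.inr t))))) : ℕ) = a + (1 + (1 + (t : ℕ))) := by
  simp [eIdx]

@[simp] lemma eIdx_s (a c : ℕ) (z : Fin 1) :
    ((eIdx a c (.inr z)) : ℕ) = a + (1 + (1 + c)) := by
  simp [eIdx, Fin.val_eq_zero]

lemma sum_ite_pair {α : Type*} [Fintype α] [DecidableEq α] (k k' : α) (A B : ℤ) :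
    (∑ x : α, if x = k then A else if k' = x then B else 0)
      = A + if k' = k then 0 else B := by
  classical
  have h : ∀ x : α, (if x = k then A else if k' = x then B else 0)
      = (if x = k then A - (if k' = k then B else 0) else 0) + (if x = k' then B else 0) := by
    intro x
    by_cases h1 : x = k
    · subst h1
      by_cases h2 : k' = x
      · subst h2; simp
      · simp [h2, show ¬ x = k' from fun h => h2 h.symm]
    · by_cases h2 : k' = x
      · subst h2; simp [h1]
      · simp [h1, h2, show ¬ x = k' from fun h => h2 h.symm]
  rw [Finset.sum_congr rfl fun x _ => h x, Finset.sum_add_distrib]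
  simp only [Finset.sum_ite_eq', Finset.mem_univ, if_true]
  split_ifs <;> ring

lemma sum_ite_const {α : Type*} [Fintype α] [DecidableEq α] (k : α) (A B : ℤ) :
    (∑ x : α, if x = k then A else B) = (A - B) + (Fintype.card α) * B := by
  have h : ∀ x : α, (if x = k then A else B) = (if x = k then A - B else 0) + B := by
    intro x; split_ifs <;> ring
  rw [Finset.sum_congr rfl fun x _ => h x, Finset.sum_add_distrib]
  simp [Finset.sum_ite_eq', Finset.card_univ, mul_comm]

def D0 (a c : ℕ) : Matrix (Idx a c) (Idx a c) ℤ := fun x y =>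
  match x, y with
  | .inl (.inl k), .inl (.inl k') => if k' = k then 0 else 1
  | .inl (.inl _), .inl (.inr (.inl _)) => 1
  | .inl (.inl _), .inl (.inr (.inr (.inl _))) => 1
  | .inl (.inl _), .inl (.inr (.inr (.inr _))) => 1
  | .inl (.inl _), .inr _ => 2
  | .inl (.inr (.inl _)), .inl (.inl _) => 2
  | .inl (.inr (.inl _)), .inl (.inr (.inl _)) => 0
  | .inl (.inr (.inl _)), .inl (.inr (.inr (.inl _))) => 2
  | .inl (.inr (.inl _)), .inl (.inr (.inr (.inr _))) => 2
  | .inl (.inr (.inl _)), .inr _ => 1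
  | .inl (.inr (.inr (.inl _))), .inl (.inl _) => 2
  | .inl (.inr (.inr (.inl _))), .inl (.inr (.inl _)) => 2
  | .inl (.inr (.inr (.inl _))), .inl (.inr (.inr (.inl _))) => 0
  | .inl (.inr (.inr (.inl _))), .inl (.inr (.inr (.inr _))) => 2
  | .inl (.inr (.inr (.inl _))), .inr _ => 1
  | .inl (.inr (.inr (.inr _))), .inl (.inl _) => 2
  | .inl (.inr (.inr (.inr _))), .inl (.inr (.inl _)) => 2
  | .inl (.inr (.inr (.inr _))), .inl (.inr (.inr (.inl _))) => 2
  | .inl (.inr (.inr (.inr t))), .inl (.inr (.inr (.inr t'))) => if t' = t then 0 else 2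
  | .inl (.inr (.inr (.inr _))), .inr _ => 1
  | .inr _, .inl (.inl _) => 1
  | .inr _, .inl (.inr (.inl _)) => 1
  | .inr _, .inl (.inr (.inr (.inl _))) => 1
  | .inr _, .inl (.inr (.inr (.inr _))) => 1
  | .inr _, .inr _ => 0

def Pm (a c : ℕ) : Matrix (Idx a c) (Idx a c) ℤ := fun x y =>
  match x, y with
  | .inl (.inl k), .inl (.inl k') => if k' = k then -1 else 0
  | .inl (.inl _), .inl (.inr (.inl _)) => 0
  | .inl (.inl _), .inl (.inr (.inr (.inl _))) => 0
  | .inl (.inl _), .inl (.inr (.inr (.inr _))) => 0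
  | .inl (.inl _), .inr _ => 1
  | .inl (.inr (.inl _)), .inl (.inl _) => 0
  | .inl (.inr (.inl _)), .inl (.inr (.inl _)) => 0
  | .inl (.inr (.inl _)), .inl (.inr (.inr (.inl _))) => 0
  | .inl (.inr (.inl _)), .inl (.inr (.inr (.inr _))) => 0
  | .inl (.inr (.inl _)), .inr _ => 1
  | .inl (.inr (.inr (.inl _))), .inl (.inl _) => 0
  | .inl (.inr (.inr (.inl _))), .inl (.inr (.inl _)) => 0
  | .inl (.inr (.inr (.inl _))), .inl (.inr (.inr (.inl _))) => 1
  | .inl (.inr (.inr (.inl _))), .inl (.inr (.inr (.inr _))) => 0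
  | .inl (.inr (.inr (.inl _))), .inr _ => -2
  | .inl (.inr (.inr (.inr _))), .inl (.inl _) => 0
  | .inl (.inr (.inr (.inr _))), .inl (.inr (.inl _)) => 0
  | .inl (.inr (.inr (.inr _))), .inl (.inr (.inr (.inl _))) => 1
  | .inl (.inr (.inr (.inr t))), .inl (.inr (.inr (.inr t'))) => if t' = t then -1 else 0
  | .inl (.inr (.inr (.inr _))), .inr _ => 0
  | .inr _, .inl (.inl _) => 2
  | .inr _, .inl (.inr (.inl _)) => 1
  | .inr _, .inl (.inr (.inr (.inl _))) => -(4 * (a : ℤ) + (c : ℤ) + 1)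
  | .inr _, .inl (.inr (.inr (.inr _))) => 1
  | .inr _, .inr _ => 6 * (a : ℤ) + 2

def Pim (a c : ℕ) : Matrix (Idx a c) (Idx a c) ℤ := fun x y =>
  match x, y with
  | .inl (.inl k), .inl (.inl k') => if k' = k then -1 else 0
  | .inl (.inl _), .inl (.inr (.inl _)) => 1
  | .inl (.inl _), .inl (.inr (.inr (.inl _))) => 0
  | .inl (.inl _), .inl (.inr (.inr (.inr _))) => 0
  | .inl (.inl _), .inr _ => 0
  | .inl (.inr (.inl _)), .inl (.inl _) => 2
  | .inl (.inr (.inl _)), .inl (.inr (.inl _)) => 0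
  | .inl (.inr (.inl _)), .inl (.inr (.inr (.inl _))) => 4 * (a : ℤ) + 1
  | .inl (.inr (.inl _)), .inl (.inr (.inr (.inr _))) => 1
  | .inl (.inr (.inl _)), .inr _ => 1
  | .inl (.inr (.inr (.inl _))), .inl (.inl _) => 0
  | .inl (.inr (.inr (.inl _))), .inl (.inr (.inl _)) => 2
  | .inl (.inr (.inr (.inl _))), .inl (.inr (.inr (.inl _))) => 1
  | .inl (.inr (.inr (.inl _))), .inl (.inr (.inr (.inr _))) => 0
  | .inl (.inr (.inr (.inl _))), .inr _ => 0
  | .inl (.inr (.inr (.inr _))), .inl (.inl _) => 0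
  | .inl (.inr (.inr (.inr _))), .inl (.inr (.inl _)) => 2
  | .inl (.inr (.inr (.inr _))), .inl (.inr (.inr (.inl _))) => 1
  | .inl (.inr (.inr (.inr t))), .inl (.inr (.inr (.inr t'))) => if t' = t then -1 else 0
  | .inl (.inr (.inr (.inr _))), .inr _ => 0
  | .inr _, .inl (.inl _) => 0
  | .inr _, .inl (.inr (.inl _)) => 1
  | .inr _, .inl (.inr (.inr (.inl _))) => 0
  | .inr _, .inl (.inr (.inr (.inr _))) => 0
  | .inr _, .inr _ => 0

def Qm (a c : ℕ) : Matrix (Idx a c) (Idx a c) ℤ := fun x y =>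
  match x, y with
  | .inl (.inl k), .inl (.inl k') => if k' = k then 1 else 0
  | .inl (.inl _), .inl (.inr (.inl _)) => 0
  | .inl (.inl _), .inl (.inr (.inr (.inl _))) => 2
  | .inl (.inl _), .inl (.inr (.inr (.inr _))) => 0
  | .inl (.inl _), .inr _ => 4
  | .inl (.inr (.inl _)), .inl (.inl _) => -1
  | .inl (.inr (.inl _)), .inl (.inr (.inl _)) => 1
  | .inl (.inr (.inl _)), .inl (.inr (.inr (.inl _))) => -2 * (a : ℤ)
  | .inl (.inr (.inl _)), .inl (.inr (.inr (.inr _))) => -1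
  | .inl (.inr (.inl _)), .inr _ => -(4 * (a : ℤ) + (c : ℤ) + 1)
  | .inl (.inr (.inr (.inl _))), .inl (.inl _) => 0
  | .inl (.inr (.inr (.inl _))), .inl (.inr (.inl _)) => 0
  | .inl (.inr (.inr (.inl _))), .inl (.inr (.inr (.inl _))) => 0
  | .inl (.inr (.inr (.inl _))), .inl (.inr (.inr (.inr _))) => 0
  | .inl (.inr (.inr (.inl _))), .inr _ => 1
  | .inl (.inr (.inr (.inr _))), .inl (.inl _) => 0
  | .inl (.inr (.inr (.inr _))), .inl (.inr (.inl _)) => 0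
  | .inl (.inr (.inr (.inr _))), .inl (.inr (.inr (.inl _))) => 0
  | .inl (.inr (.inr (.inr t))), .inl (.inr (.inr (.inr t'))) => if t' = t then 1 else 0
  | .inl (.inr (.inr (.inr _))), .inr _ => 1
  | .inr _, .inl (.inl _) => 0
  | .inr _, .inl (.inr (.inl _)) => 0
  | .inr _, .inl (.inr (.inr (.inl _))) => 1
  | .inr _, .inl (.inr (.inr (.inr _))) => 0
  | .inr _, .inr _ => 2

def Qim (a c : ℕ) : Matrix (Idx a c) (Idx a c) ℤ := fun x y =>
  match x, y with
  | .inl (.inl k), .inl (.inl k') => if k' = k then 1 else 0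
  | .inl (.inl _), .inl (.inr (.inl _)) => 0
  | .inl (.inl _), .inl (.inr (.inr (.inl _))) => 0
  | .inl (.inl _), .inl (.inr (.inr (.inr _))) => 0
  | .inl (.inl _), .inr _ => -2
  | .inl (.inr (.inl _)), .inl (.inl _) => 1
  | .inl (.inr (.inl _)), .inl (.inr (.inl _)) => 1
  | .inl (.inr (.inl _)), .inl (.inr (.inr (.inl _))) => 1
  | .inl (.inr (.inl _)), .inl (.inr (.inr (.inr _))) => 1
  | .inl (.inr (.inl _)), .inr _ => 0
  | .inl (.inr (.inr (.inl _))), .inl (.inl _) => 0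
  | .inl (.inr (.inr (.inl _))), .inl (.inr (.inl _)) => 0
  | .inl (.inr (.inr (.inl _))), .inl (.inr (.inr (.inl _))) => -2
  | .inl (.inr (.inr (.inl _))), .inl (.inr (.inr (.inr _))) => 0
  | .inl (.inr (.inr (.inl _))), .inr _ => 1
  | .inl (.inr (.inr (.inr _))), .inl (.inl _) => 0
  | .inl (.inr (.inr (.inr _))), .inl (.inr (.inl _)) => 0
  | .inl (.inr (.inr (.inr _))), .inl (.inr (.inr (.inl _))) => -1
  | .inl (.inr (.inr (.inr t))), .inl (.inr (.inr (.inr t'))) => if t' = t then 1 else 0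
  | .inl (.inr (.inr (.inr _))), .inr _ => 0
  | .inr _, .inl (.inl _) => 0
  | .inr _, .inl (.inr (.inl _)) => 0
  | .inr _, .inl (.inr (.inr (.inl _))) => 1
  | .inr _, .inl (.inr (.inr (.inr _))) => 0
  | .inr _, .inr _ => 0

def Mm (a c : ℕ) : Matrix (Idx a c) (Idx a c) ℤ := fun x y =>
  match x, y with
  | .inl (.inl k), .inl (.inl k') => if k' = k then -1 else 0
  | .inl (.inl _), .inl (.inr (.inl _)) => 1
  | .inl (.inl _), .inl (.inr (.inr (.inl _))) => 0
  | .inl (.inl _), .inl (.inr (.inr (.inr _))) => 0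
  | .inl (.inl _), .inr _ => 0
  | .inl (.inr (.inl _)), .inl (.inl _) => 2
  | .inl (.inr (.inl _)), .inl (.inr (.inl _)) => 0
  | .inl (.inr (.inl _)), .inl (.inr (.inr (.inl _))) => 4 * (a : ℤ) + 1
  | .inl (.inr (.inl _)), .inl (.inr (.inr (.inr _))) => 2
  | .inl (.inr (.inl _)), .inr _ => 8 * (a : ℤ) + 2 * (c : ℤ) + 4
  | .inl (.inr (.inr (.inl _))), .inl (.inl _) => 0
  | .inl (.inr (.inr (.inl _))), .inl (.inr (.inl _)) => 2
  | .inl (.inr (.inr (.inl _))), .inl (.inr (.inr (.inl _))) => 1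
  | .inl (.inr (.inr (.inl _))), .inl (.inr (.inr (.inr _))) => 0
  | .inl (.inr (.inr (.inl _))), .inr _ => 0
  | .inl (.inr (.inr (.inr _))), .inl (.inl _) => 0
  | .inl (.inr (.inr (.inr _))), .inl (.inr (.inl _)) => 2
  | .inl (.inr (.inr (.inr _))), .inl (.inr (.inr (.inl _))) => 1
  | .inl (.inr (.inr (.inr t))), .inl (.inr (.inr (.inr t'))) => if t' = t then -2 else 0
  | .inl (.inr (.inr (.inr _))), .inr _ => 0
  | .inr _, .inl (.inl _) => 0
  | .inr _, .inl (.inr (.inl _)) => 1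
  | .inr _, .inl (.inr (.inr (.inl _))) => 0
  | .inr _, .inl (.inr (.inr (.inr _))) => 0
  | .inr _, .inr _ => 0

def Dg0 (a c : ℕ) : Matrix (Idx a c) (Idx a c) ℤ := fun x y =>
  match x, y with
  | .inl (.inl k), .inl (.inl k') => if k' = k then 1 else 0
  | .inl (.inl _), .inl (.inr (.inl _)) => 0
  | .inl (.inl _), .inl (.inr (.inr (.inl _))) => 0
  | .inl (.inl _), .inl (.inr (.inr (.inr _))) => 0
  | .inl (.inl _), .inr _ => 0
  | .inl (.inr (.inl _)), .inl (.inl _) => 0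
  | .inl (.inr (.inl _)), .inl (.inr (.inl _)) => 1
  | .inl (.inr (.inl _)), .inl (.inr (.inr (.inl _))) => 0
  | .inl (.inr (.inl _)), .inl (.inr (.inr (.inr _))) => 0
  | .inl (.inr (.inl _)), .inr _ => 0
  | .inl (.inr (.inr (.inl _))), .inl (.inl _) => 0
  | .inl (.inr (.inr (.inl _))), .inl (.inr (.inl _)) => 0
  | .inl (.inr (.inr (.inl _))), .inl (.inr (.inr (.inl _))) => 1
  | .inl (.inr (.inr (.inl _))), .inl (.inr (.inr (.inr _))) => 0
  | .inl (.inr (.inr (.inl _))), .inr _ => 0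
  | .inl (.inr (.inr (.inr _))), .inl (.inl _) => 0
  | .inl (.inr (.inr (.inr _))), .inl (.inr (.inl _)) => 0
  | .inl (.inr (.inr (.inr _))), .inl (.inr (.inr (.inl _))) => 0
  | .inl (.inr (.inr (.inr t))), .inl (.inr (.inr (.inr t'))) => if t' = t then 2 else 0
  | .inl (.inr (.inr (.inr _))), .inr _ => 0
  | .inr _, .inl (.inl _) => 0
  | .inr _, .inl (.inr (.inl _)) => 0
  | .inr _, .inl (.inr (.inr (.inl _))) => 0
  | .inr _, .inl (.inr (.inr (.inr _))) => 0
  | .inr _, .inr _ => 8 * (a : ℤ) + 2 * (c : ℤ) + 4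



set_option maxHeartbeats 0 in
lemma hDQ (a c : ℕ) : D0 a c * Qm a c = Mm a c := by
  ext x y
  rw [Matrix.mul_apply]
  rcases x with (x1 | x1 | x1 | x1) | x1 <;> rcases y with (y1 | y1 | y1 | y1) | y1 <;>
    simp only [D0, Qm, Mm, Fintype.sum_sum_type, Fin.sum_univ_one, sum_ite_pair, sum_ite_const,
      Finset.sum_ite_eq, Finset.sum_ite_eq', Finset.mem_univ, if_true, Finset.sum_const,
      Finset.card_univ, Fintype.card_fin, nsmul_eq_mul, smul_eq_mul, mul_ite, ite_mul,
      mul_zero, zero_mul, mul_one, one_mul, neg_mul, mul_neg, neg_neg, neg_zero, add_zero, zero_add,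
      ite_self, Sum.inl.injEq, Sum.inr.injEq, reduceCtorEq, if_false,
      Finset.sum_add_distrib, Finset.sum_neg_distrib, mul_comm] <;>
    (try split_ifs) <;> (first | omega | (simp_all [Fin.ext_iff]; omega) | simp_all [Fin.ext_iff])

set_option maxHeartbeats 0 in
lemma hPM (a c : ℕ) : Pm a c * Mm a c = Dg0 a c := by
  ext x y
  rw [Matrix.mul_apply]
  rcases x with (x1 | x1 | x1 | x1) | x1 <;> rcases y with (y1 | y1 | y1 | y1) | y1 <;>
    simp only [Pm, Mm, Dg0, Fintype.sum_sum_type, Fin.sum_univ_one, sum_ite_pair, sum_ite_const,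
      Finset.sum_ite_eq, Finset.sum_ite_eq', Finset.mem_univ, if_true, Finset.sum_const,
      Finset.card_univ, Fintype.card_fin, nsmul_eq_mul, smul_eq_mul, mul_ite, ite_mul,
      mul_zero, zero_mul, mul_one, one_mul, neg_mul, mul_neg, neg_neg, neg_zero, add_zero, zero_add,
      ite_self, Sum.inl.injEq, Sum.inr.injEq, reduceCtorEq, if_false,
      Finset.sum_add_distrib, Finset.sum_neg_distrib, mul_comm] <;>
    (try split_ifs) <;> (first | omega | (simp_all [Fin.ext_iff]; omega) | simp_all [Fin.ext_iff])

set_option maxHeartbeats 0 in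
lemma hPPi (a c : ℕ) : Pm a c * Pim a c = 1 := by
  ext x y
  rw [Matrix.mul_apply]
  rcases x with (x1 | x1 | x1 | x1) | x1 <;> rcases y with (y1 | y1 | y1 | y1) | y1 <;>
    simp only [Pm, Pim, Matrix.one_apply, Fintype.sum_sum_type, Fin.sum_univ_one, sum_ite_pair, sum_ite_const,
      Finset.sum_ite_eq, Finset.sum_ite_eq', Finset.mem_univ, if_true, Finset.sum_const,
      Finset.card_univ, Fintype.card_fin, nsmul_eq_mul, smul_eq_mul, mul_ite, ite_mul,
      mul_zero, zero_mul, mul_one, one_mul, neg_mul, mul_neg, neg_neg, neg_zero, add_zero, zero_add,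
      ite_self, Sum.inl.injEq, Sum.inr.injEq, reduceCtorEq, if_false,
      Finset.sum_add_distrib, Finset.sum_neg_distrib, mul_comm] <;>
    (try split_ifs) <;> (first | omega | (simp_all [Fin.ext_iff]; omega) | simp_all [Fin.ext_iff])

set_option maxHeartbeats 0 in
lemma hQQi (a c : ℕ) : Qm a c * Qim a c = 1 := by
  ext x y
  rw [Matrix.mul_apply]
  rcases x with (x1 | x1 | x1 | x1) | x1 <;> rcases y with (y1 | y1 | y1 | y1) | y1 <;>
    simp only [Qm, Qim, Matrix.one_apply, Fintype.sum_sum_type, Fin.sum_univ_one, sum_ite_pair, sum_ite_const,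
      Finset.sum_ite_eq, Finset.sum_ite_eq', Finset.mem_univ, if_true, Finset.sum_const,
      Finset.card_univ, Fintype.card_fin, nsmul_eq_mul, smul_eq_mul, mul_ite, ite_mul,
      mul_zero, zero_mul, mul_one, one_mul, neg_mul, mul_neg, neg_neg, neg_zero, add_zero, zero_add,
      ite_self, Sum.inl.injEq, Sum.inr.injEq, reduceCtorEq, if_false,
      Finset.sum_add_distrib, Finset.sum_neg_distrib, mul_comm] <;>
    (try split_ifs) <;> (first | omega | (simp_all [Fin.ext_iff]; omega) | simp_all [Fin.ext_iff])

set_option maxHeartbeats 1000000 in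
lemma hD (a c : ℕ) :
    (lambdaD a (1 + (1 + c))).submatrix (eIdx a c) (eIdx a c) = D0 a c := by
  ext x y
  rcases x with (x1 | x1 | x1 | x1) | x1 <;> rcases y with (y1 | y1 | y1 | y1) | y1 <;>
    have hx := x1.isLt <;> have hy := y1.isLt <;>
    simp only [Matrix.submatrix_apply, lambdaD, Matrix.of_apply, D0, Fin.ext_iff,
      eIdx_K, eIdx_t1, eIdx_t2, eIdx_T, eIdx_s] <;>
    split_ifs <;> omega

set_option maxHeartbeats 1000000 in
lemma hDg (a c : ℕ) :
    (Matrix.diagonal fun i : Fin (a + (1 + (1 + c)) + 1) =>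
        if i.val < a + 2 then (1 : ℤ)
        else if i.val < a + (1 + (1 + c)) then 2
        else 8 * a + 2 * ((1 + (1 + c) : ℕ) : ℤ)).submatrix (eIdx a c) (eIdx a c)
      = Dg0 a c := by
  ext x y
  rcases x with (x1 | x1 | x1 | x1) | x1 <;> rcases y with (y1 | y1 | y1 | y1) | y1 <;>
    have hx := x1.isLt <;> have hy := y1.isLt <;>
    simp only [Matrix.submatrix_apply, Matrix.diagonal_apply, Dg0, Fin.ext_iff,
      eIdx_K, eIdx_t1, eIdx_t2, eIdx_T, eIdx_s] <;>
    split_ifs <;> (try push_cast) <;> omega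

end SnfAux

theorem snf_lambdaD (a b : ℕ) (hb : 2 ≤ b) :
    IntEquiv (lambdaD a b)
      (Matrix.diagonal fun i : Fin (a + b + 1) =>
        if i.val < a + 2 then (1 : ℤ)
        else if i.val < a + b then 2
        else 8 * a + 2 * b) := by
  obtain ⟨c, rfl⟩ : ∃ c, b = 1 + (1 + c) := ⟨b - 2, by omega⟩
  refine ⟨(SnfAux.Pm a c).submatrix (SnfAux.eIdx a c).symm (SnfAux.eIdx a c).symm,
    (SnfAux.Qm a c).submatrix (SnfAux.eIdx a c).symm (SnfAux.eIdx a c).symm, ?_, ?_, ?_⟩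
  · rw [Matrix.det_submatrix_equiv_self]
    exact Matrix.isUnit_det_of_right_inverse (SnfAux.hPPi a c)
  · rw [Matrix.det_submatrix_equiv_self]
    exact Matrix.isUnit_det_of_right_inverse (SnfAux.hQQi a c)
  · have hld : lambdaD a (1 + (1 + c))
        = (SnfAux.D0 a c).submatrix (SnfAux.eIdx a c).symm (SnfAux.eIdx a c).symm := by
      rw [← SnfAux.hD a c, Matrix.submatrix_submatrix]
      simp only [Equiv.self_comp_symm, Matrix.submatrix_id_id]
    rw [hld, Matrix.submatrix_mul_equiv, Matrix.submatrix_mul_equiv, Matrix.mul_assoc,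
      SnfAux.hDQ, SnfAux.hPM]
    rw [← SnfAux.hDg a c, Matrix.submatrix_submatrix]
    simp only [Equiv.self_comp_symm, Matrix.submatrix_id_id]
end

section
/- Let G be a strong digraph on a finite vertex type V. If there exist vertices u and v with dist(u,v) ≥ 3 (i.e., the diameter of G is at least 3), then the second distance ideal I_2(G) is the unit ideal of ℤ[x_v : v ∈ V]. -/
open MvPolynomial

/-- A directed walk of length `k` from `u` to `v` in the digraph with arc relation `A`. -/
def IsWalk {V : Type*} (A : V → V → Prop) (k : ℕ) (u v : V) : Prop :=
  ∃ f : Fin (k + 1) → V, f 0 = u ∧ f (Fin.last k) = v ∧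
    ∀ i : Fin k, A (f i.castSucc) (f i.succ)

/-- The distance from `u` to `v`: the minimum length of a directed walk from `u` to `v`. -/
noncomputable def ddist {V : Type*} (A : V → V → Prop) (u v : V) : ℕ :=
  sInf {k | IsWalk A k u v}

/-- The matrix `D_X(G)`: variable `x_v` at the `(v,v)` entry, and the constant
`dist(u,v)` at the `(u,v)` entry for `u ≠ v`. -/
noncomputable def distDX {V : Type*} [DecidableEq V] (A : V → V → Prop) :
    Matrix V V (MvPolynomial V ℤ) :=
  Matrix.of fun u v => if u = v then X u else C (ddist A u v : ℤ)

section Aux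

variable {V : Type*} (A : V → V → Prop)

/-- ℕ-indexed version of walks. -/
def NW (k : ℕ) (u v : V) : Prop :=
  ∃ g : ℕ → V, g 0 = u ∧ g k = v ∧ ∀ i < k, A (g i) (g (i+1))

lemma isWalk_iff_NW (k : ℕ) (u v : V) : IsWalk A k u v ↔ NW A k u v := by
  constructor
  · rintro ⟨f, h0, hk, hA⟩
    refine ⟨fun i => f ⟨min i k, Nat.lt_succ_of_le (min_le_right _ _)⟩, ?_, ?_, ?_⟩
    · simpa using h0
    · simpa [Fin.last] using hk
    · intro i hi
      have h1 : min i k = i := min_eq_left hi.le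
      have h2 : min (i+1) k = i+1 := min_eq_left hi
      have := hA ⟨i, hi⟩
      simp only [Fin.castSucc_mk, Fin.succ_mk] at this
      simp only [h1, h2]
      exact this
  · rintro ⟨g, h0, hk, hA⟩
    exact ⟨fun i => g i, h0, by simpa [Fin.last] using hk, fun i => hA i i.isLt⟩

lemma NW_trans {m n : ℕ} {u w v : V} (h1 : NW A m u w) (h2 : NW A n w v) :
    NW A (m + n) u v := by
  obtain ⟨g1, g10, g1m, hg1⟩ := h1
  obtain ⟨g2, g20, g2n, hg2⟩ := h2
  refine ⟨fun i => if i ≤ m then g1 i else g2 (i - m), by simp [g10], ?_, ?_⟩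
  · rcases Nat.eq_zero_or_pos n with hn | hn
    · subst hn
      simp [g1m, ← g20, g2n]
    · have h : ¬ (m + n ≤ m) := by omega
      simp only [h, if_neg, not_false_iff]
      rw [Nat.add_sub_cancel_left, g2n]
  · intro i hi
    by_cases h : i + 1 ≤ m
    · have hi' : i ≤ m := by omega
      simp only [h, hi', if_pos]
      exact hg1 i (by omega)
    · have him : m ≤ i := by omega
      simp only [h, if_neg, not_false_iff]
      by_cases hem : i ≤ m
      · have hieq : i = m := le_antisymm hem him
        subst hieq
        simp only [hem, if_pos]
        rw [g1m, ← g20]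
        have he : i + 1 - i = 0 + 1 := by omega
        rw [he]
        exact hg2 0 (by omega)
      · simp only [hem, if_neg, not_false_iff]
        have he : i + 1 - m = (i - m) + 1 := by omega
        rw [he]
        exact hg2 (i - m) (by omega)

lemma NW_sub {k : ℕ} {g : ℕ → V} (hg : ∀ i < k, A (g i) (g (i+1)))
    {i j : ℕ} (hij : i ≤ j) (hjk : j ≤ k) : NW A (j - i) (g i) (g j) := by
  refine ⟨fun n => g (i + n), by simp, ?_, ?_⟩
  · show g (i + (j - i)) = g j
    rw [Nat.add_sub_cancel' hij]
  · intro n hn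
    show A (g (i + n)) (g (i + (n + 1)))
    have he : i + (n + 1) = i + n + 1 := by omega
    rw [he]
    exact hg (i + n) (by omega)

lemma ddist_self (x : V) : ddist A x x = 0 := by
  have h : IsWalk A 0 x x := ⟨fun _ => x, rfl, rfl, fun i => i.elim0⟩
  exact Nat.le_zero.mp (Nat.sInf_le h)

end Aux

theorem second_distance_ideal_of_diam_ge_three {V : Type*} [Fintype V] [DecidableEq V]
    (A : V → V → Prop) (hirr : Irreflexive A)
    (hstrong : ∀ u v : V, ∃ k, IsWalk A k u v)
    (u v : V) (hdist : 3 ≤ ddist A u v) :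
    minorsIdeal (distDX A) 2 = ⊤ := by
  set k := ddist A u v with hk
  -- a shortest walk from u to v
  have hne : {n | IsWalk A n u v}.Nonempty := hstrong u v
  have hwalk : IsWalk A k u v := Nat.sInf_mem hne
  obtain ⟨g, hg0, hgk, hgA⟩ := (isWalk_iff_NW A k u v).mp hwalk
  -- distances along the shortest walk
  have key : ∀ i j : ℕ, i ≤ j → j ≤ k → ddist A (g i) (g j) = j - i := by
    intro i j hij hjk
    have hub : ddist A (g i) (g j) ≤ j - i :=
      Nat.sInf_le ((isWalk_iff_NW A _ _ _).mpr (NW_sub A hgA hij hjk))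
    have hne2 : {n | IsWalk A n (g i) (g j)}.Nonempty := hstrong _ _
    have hopt : IsWalk A (ddist A (g i) (g j)) (g i) (g j) := Nat.sInf_mem hne2
    set d := ddist A (g i) (g j) with hd
    -- compose u → g i → g j → v
    have w1 : NW A (i - 0) (g 0) (g i) := NW_sub A hgA (Nat.zero_le i) (hij.trans hjk)
    have w2 : NW A d (g i) (g j) := (isWalk_iff_NW A _ _ _).mp hopt
    have w3 : NW A (k - j) (g j) (g k) := NW_sub A hgA hjk le_rfl
    have wall : NW A ((i - 0) + d + (k - j)) (g 0) (g k) :=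
      NW_trans A (NW_trans A w1 w2) w3
    rw [hg0, hgk] at wall
    have hlow : k ≤ (i - 0) + d + (k - j) :=
      Nat.sInf_le ((isWalk_iff_NW A _ _ _).mpr wall)
    omega
  -- vertices along the walk are pairwise distinct
  have hdistinct : ∀ i j : ℕ, i < j → j ≤ k → g i ≠ g j := by
    intro i j hij hjk h
    have := key i j hij.le hjk
    rw [h, ddist_self] at this
    omega
  -- the specific distances
  have d02 : ddist A (g 0) (g 2) = 2 := key 0 2 (by omega) (by omega)
  have d03 : ddist A (g 0) (g 3) = 3 := key 0 3 (by omega) (by omega)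
  have d12 : ddist A (g 1) (g 2) = 1 := key 1 2 (by omega) (by omega)
  have d13 : ddist A (g 1) (g 3) = 2 := key 1 3 (by omega) (by omega)
  -- the 2×2 minor with rows (g 0, g 1) and columns (g 2, g 3) has determinant 1
  rw [Ideal.eq_top_iff_one, minorsIdeal]
  apply Ideal.subset_span
  refine ⟨![g 0, g 1], ![g 2, g 3], ?_, ?_, ?_⟩
  · have h01 : g 0 ≠ g 1 := hdistinct 0 1 (by omega) (by omega)
    intro a b hab
    fin_cases a <;> fin_cases b <;> simp_all
  · have h23 : g 2 ≠ g 3 := hdistinct 2 3 (by omega) (by omega)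
    intro a b hab
    fin_cases a <;> fin_cases b <;> simp_all
  · rw [Matrix.det_fin_two]
    have n02 : g 0 ≠ g 2 := hdistinct 0 2 (by omega) (by omega)
    have n03 : g 0 ≠ g 3 := hdistinct 0 3 (by omega) (by omega)
    have n12 : g 1 ≠ g 2 := hdistinct 1 2 (by omega) (by omega)
    have n13 : g 1 ≠ g 3 := hdistinct 1 3 (by omega) (by omega)
    simp only [Matrix.submatrix_apply, Matrix.cons_val_zero, Matrix.cons_val_one,
      Matrix.head_cons, distDX, Matrix.of_apply, if_neg n02, if_neg n03, if_neg n12,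
      if_neg n13, d02, d03, d12, d13]
    rw [← C_mul, ← C_mul, ← C_sub]
    norm_num
end

section
/- Let G be a strong digraph on a finite vertex type V with diameter at most 2, i.e., dist(u,v) ≤ 2 for all vertices u, v. Suppose there exist pairwise distinct vertices u, v, w, z such that (u,v) and (v,w) are arcs of G, while (u,w), (u,z) and (v,z) are not arcs of G. Then the second distance ideal I_2(G) is the unit ideal of ℤ[x_v : v ∈ V]. -/
open MvPolynomial

lemma isWalk_one {V : Type*} {A : V → V → Prop} {a b : V} (h : A a b) : IsWalk A 1 a b := by
  refine ⟨![a, b], rfl, rfl, fun i => ?_⟩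
  fin_cases i
  simpa using h

lemma eq_of_isWalk_zero {V : Type*} {A : V → V → Prop} {a b : V} (h : IsWalk A 0 a b) :
    a = b := by
  obtain ⟨f, h0, hl, -⟩ := h
  rw [← h0, ← hl]; rfl

lemma arc_of_isWalk_one {V : Type*} {A : V → V → Prop} {a b : V} (h : IsWalk A 1 a b) :
    A a b := by
  obtain ⟨f, h0, hl, hmid⟩ := h
  have := hmid 0
  rw [show (0 : Fin 1).castSucc = 0 from rfl, show (0 : Fin 1).succ = Fin.last 1 from rfl,
    h0, hl] at this
  exact this

lemma ddist_eq_one {V : Type*} {A : V → V → Prop} {a b : V} (hne : a ≠ b) (h : A a b) :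
    ddist A a b = 1 := by
  have h1 : IsWalk A 1 a b := isWalk_one h
  have hmem : IsWalk A (ddist A a b) a b := Nat.sInf_mem (⟨1, h1⟩ : {k | IsWalk A k a b}.Nonempty)
  have hle : ddist A a b ≤ 1 := Nat.sInf_le h1
  have hne0 : ddist A a b ≠ 0 := fun h0 => hne (eq_of_isWalk_zero (h0 ▸ hmem))
  omega

lemma ddist_eq_two {V : Type*} {A : V → V → Prop} {a b : V}
    (hstrong : ∀ u v : V, ∃ k, IsWalk A k u v) (hdiam : ∀ u v : V, ddist A u v ≤ 2)
    (hne : a ≠ b) (h : ¬ A a b) : ddist A a b = 2 := by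
  obtain ⟨k, hk⟩ := hstrong a b
  have hmem : IsWalk A (ddist A a b) a b := Nat.sInf_mem (⟨k, hk⟩ : {k | IsWalk A k a b}.Nonempty)
  have hle : ddist A a b ≤ 2 := hdiam a b
  have hne0 : ddist A a b ≠ 0 := fun h0 => hne (eq_of_isWalk_zero (h0 ▸ hmem))
  have hne1 : ddist A a b ≠ 1 := fun h1 => h (arc_of_isWalk_one (h1 ▸ hmem))
  omega

/-- Pattern F₁: a strong digraph of diameter at most 2 containing the pattern `F₁`
has trivial second distance ideal. -/
theorem second_ideal_trivial_of_pattern_F1 {V : Type*} [Fintype V] [DecidableEq V]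
    (A : V → V → Prop) (hirr : Irreflexive A)
    (hstrong : ∀ u v : V, ∃ k, IsWalk A k u v)
    (hdiam : ∀ u v : V, ddist A u v ≤ 2)
    (u v w z : V)
    (huv : u ≠ v) (huw : u ≠ w) (huz : u ≠ z) (hvw : v ≠ w) (hvz : v ≠ z) (hwz : w ≠ z)
    (h1 : A u v) (h2 : A v w)
    (h3 : ¬ A u w) (h4 : ¬ A u z) (h5 : ¬ A v z) :
    minorsIdeal (distDX A) 2 = ⊤ := by
  have euv : ddist A u v = 1 := ddist_eq_one huv h1
  have evw : ddist A v w = 1 := ddist_eq_one hvw h2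
  have euw : ddist A u w = 2 := ddist_eq_two hstrong hdiam huw h3
  have euz : ddist A u z = 2 := ddist_eq_two hstrong hdiam huz h4
  have evz : ddist A v z = 2 := ddist_eq_two hstrong hdiam hvz h5
  have hrinj : Function.Injective ![u, v] := by
    intro i j hij; fin_cases i <;> fin_cases j <;> simp_all
  have hc1inj : Function.Injective ![v, w] := by
    intro i j hij; fin_cases i <;> fin_cases j <;> simp_all
  have hc2inj : Function.Injective ![v, z] := by
    intro i j hij; fin_cases i <;> fin_cases j <;> simp_all
  set S : Set (MvPolynomial V ℤ) :=
    { p | ∃ (r c : Fin 2 → V), Function.Injective r ∧ Function.Injective c ∧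
      p = ((distDX A).submatrix r c).det } with hS
  have hp1 : (((distDX A).submatrix ![u, v] ![v, w]).det) ∈ Ideal.span S :=
    Ideal.subset_span ⟨![u, v], ![v, w], hrinj, hc1inj, rfl⟩
  have hp2 : (((distDX A).submatrix ![u, v] ![v, z]).det) ∈ Ideal.span S :=
    Ideal.subset_span ⟨![u, v], ![v, z], hrinj, hc2inj, rfl⟩
  have e1 : ((distDX A).submatrix ![u, v] ![v, w]).det = 1 - C 2 * X v := by
    rw [Matrix.det_fin_two]
    simp [distDX, huv, huw, hvw, hvw.symm, euv, evw, euw]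
  have e2 : ((distDX A).submatrix ![u, v] ![v, z]).det = C 2 - C 2 * X v := by
    rw [Matrix.det_fin_two]
    simp [distDX, huv, huz, hvz, hvz.symm, euv, euz, evz]
  have hone : (1 : MvPolynomial V ℤ) ∈ Ideal.span S := by
    have : (1 : MvPolynomial V ℤ) = ((distDX A).submatrix ![u, v] ![v, z]).det -
        ((distDX A).submatrix ![u, v] ![v, w]).det := by
      rw [e1, e2]; simp [map_ofNat]; ring
    rw [this]
    exact Ideal.sub_mem _ hp2 hp1
  rw [minorsIdeal, ← hS]
  exact Ideal.eq_top_of_isUnit_mem _ hone isUnit_one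
end

section
/- Let G be a connected simple graph on a finite vertex type V with at least two vertices. Then the second distance ideal I_2(G) is a proper ideal of ℤ[x_v : v ∈ V] (equivalently, G has exactly one trivial distance ideal) if and only if G does not contain the pattern F_6, i.e., there do not exist pairwise distinct vertices u, v, w, z such that u is adjacent to w, w is adjacent to z, z is adjacent to v, and u is not adjacent to v. -/
open MvPolynomial

/-- The matrix `D_X(G)` of a simple graph `G`: variable `x_v` at the `(v,v)` entry, and
the constant graph distance `dist(u,v)` at the `(u,v)` entry for `u ≠ v`. -/
noncomputable def graphDX {V : Type*} [DecidableEq V] (G : SimpleGraph V) :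
    Matrix V V (MvPolynomial V ℤ) :=
  Matrix.of fun u v => if u = v then X u else C (G.dist u v : ℤ)

section Aux

variable {V : Type*} [DecidableEq V] {G : SimpleGraph V}

/-- The F₆ pattern. -/
def HasF6 (G : SimpleGraph V) : Prop :=
  ∃ u v w z : V,
    u ≠ v ∧ u ≠ w ∧ u ≠ z ∧ v ≠ w ∧ v ≠ z ∧ w ≠ z ∧
    G.Adj u w ∧ G.Adj w z ∧ G.Adj z v ∧ ¬ G.Adj u v

lemma inj_pair_s19 {a b : V} (h : a ≠ b) : Function.Injective ![a, b] := by
  intro i j hij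
  fin_cases i <;> fin_cases j <;> simp_all

lemma minor_mem (u z w v : V) (huz : u ≠ z) (hwv : w ≠ v) :
    ((graphDX G).submatrix ![u, z] ![w, v]).det ∈ minorsIdeal (graphDX G) 2 :=
  Ideal.subset_span ⟨![u, z], ![w, v], inj_pair_s19 huz, inj_pair_s19 hwv, rfl⟩

lemma minor_det (u z w v : V) (huw : u ≠ w) (huv : u ≠ v) (hzw : z ≠ w) (hzv : z ≠ v) :
    ((graphDX G).submatrix ![u, z] ![w, v]).det =
      C ((G.dist u w : ℤ) * (G.dist z v : ℤ) - (G.dist u v : ℤ) * (G.dist z w : ℤ)) := by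
  rw [Matrix.det_fin_two]
  simp [graphDX, huw, huv, hzw, hzv]

/-- If a walk connects two distinct vertices and the F₆ pattern is absent, then the
vertices are adjacent or at distance two. -/
lemma adj_or_mid (hnp : ¬ HasF6 G) {u v : V} (p : G.Walk u v) (huv : u ≠ v) :
    G.Adj u v ∨ ∃ m, G.Adj u m ∧ G.Adj m v := by
  induction p with
  | nil => exact absurd rfl huv
  | @cons u b v h q ih =>
    by_cases hbv : b = v
    · subst hbv; exact Or.inl h
    rcases ih hbv with hadj | ⟨m, hbm, hmv⟩
    · exact Or.inr ⟨b, h, hadj⟩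
    by_cases huvAdj : G.Adj u v
    · exact Or.inl huvAdj
    by_cases hum : u = m
    · exact Or.inl (hum ▸ hmv)
    by_cases hub : u = b
    · exact Or.inr ⟨m, hub ▸ hbm, hmv⟩
    exact absurd ⟨u, v, b, m, huv, hub, hum, (Ne.symm hbv), (hmv.ne').symm.symm,
      hbm.ne, h, hbm, hmv, huvAdj⟩ hnp

lemma step (hnp : ¬ HasF6 G) (hconn : G.Connected) {u v w : V}
    (huv : ¬ G.Adj u v) (hne : u ≠ v) (hvw : G.Adj v w) (huw : u ≠ w) : G.Adj u w := by
  obtain ⟨p⟩ := hconn.preconnected u v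
  rcases adj_or_mid hnp p hne with h | ⟨m, hum, hmv⟩
  · exact absurd h huv
  by_contra hnadj
  refine hnp ⟨u, w, m, v, huw, hum.ne, hne, ?_, hvw.ne', hmv.ne, hum, hmv, hvw, hnadj⟩
  intro hwm; exact hnadj (hwm ▸ hum)

lemma nonadj_trans (hnp : ¬ HasF6 G) (hconn : G.Connected) {u v t : V}
    (huv : ¬ G.Adj u v) (hne : u ≠ v) (hvt : ¬ G.Adj v t) (hvt' : v ≠ t) (hut : u ≠ t) :
    ¬ G.Adj u t := fun h =>
  hvt (step hnp hconn (fun h' => huv h'.symm) hne.symm h hvt')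

/-- In the absence of the pattern, a non-complete connected graph is complete bipartite,
with parts determined by adjacency to a fixed vertex `a` having a non-neighbor `b`. -/
lemma bip_char (hnp : ¬ HasF6 G) (hconn : G.Connected) {a b : V}
    (hab : ¬ G.Adj a b) (hne : a ≠ b) (u v : V) :
    G.Adj u v ↔ ¬ (G.Adj a u ↔ G.Adj a v) := by
  constructor
  · intro huv hiff
    by_cases hau : G.Adj a u
    · have hav : G.Adj a v := hiff.mp hau
      have hbu : b ≠ u := fun h => hab (h ▸ hau)
      have hbv : b ≠ v := fun h => hab (h ▸ hav)
      have h1 : G.Adj b u := step hnp hconn (fun h => hab h.symm) hne.symm hau hbu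
      have h2 : G.Adj b v := step hnp hconn (fun h => hab h.symm) hne.symm hav hbv
      exact hnp ⟨a, b, u, v, hne, hau.ne, hav.ne, hbu, hbv, huv.ne, hau, huv, h2.symm, hab⟩
    · have hav : ¬ G.Adj a v := fun h => hau (hiff.mpr h)
      have hua : u ≠ a := fun h => hav (h ▸ huv)
      have hva : v ≠ a := fun h => hau ((h ▸ huv).symm)
      exact nonadj_trans (v := a) hnp hconn (fun h => hau h.symm) hua hav (fun h => hva h.symm) huv.ne huv
  · intro hiff
    have huv : u ≠ v := fun h => hiff (h ▸ Iff.rfl)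
    by_cases hau : G.Adj a u
    · have hav : ¬ G.Adj a v := fun h => hiff ⟨fun _ => h, fun _ => hau⟩
      by_cases hva : v = a
      · exact (hva ▸ hau).symm
      · exact (step hnp hconn (fun h => hav h.symm) hva hau
          (fun h => huv h.symm)).symm
    · have hav : G.Adj a v := by
        by_contra hav
        exact hiff ⟨fun h => absurd h hau, fun h => absurd h hav⟩
      by_cases hua : u = a
      · exact hua ▸ hav
      · exact step hnp hconn (fun h => hau h.symm) hua hav huv

/-- If the `graphDX` matrix admits a rank-one factorization through a ring
homomorphism into a nontrivial ring, then the second minors ideal is proper. -/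
lemma rank1_ne_top {R : Type*} [CommRing R] [Nontrivial R]
    (φ : MvPolynomial V ℤ →+* R) (g h : V → R)
    (hfac : ∀ u v, φ (graphDX G u v) = g u * h v) :
    minorsIdeal (graphDX G) 2 ≠ ⊤ := by
  intro htop
  have hsub : { p | ∃ (r c : Fin 2 → V), Function.Injective r ∧ Function.Injective c ∧
      p = ((graphDX G).submatrix r c).det } ⊆ (RingHom.ker φ : Ideal (MvPolynomial V ℤ)) := by
    rintro p ⟨r, c, -, -, rfl⟩
    have : φ ((graphDX G).submatrix r c).det = (((graphDX G).submatrix r c).map φ).det :=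
      RingHom.map_det φ _
    simp only [SetLike.mem_coe, RingHom.mem_ker]
    rw [this, Matrix.det_fin_two]
    simp only [Matrix.map_apply, Matrix.submatrix_apply, hfac]
    ring
  have hle : minorsIdeal (graphDX G) 2 ≤ RingHom.ker φ := Ideal.span_le.mpr hsub
  rw [htop, top_le_iff] at hle
  have : φ 1 = 0 := by rw [← RingHom.mem_ker, hle]; trivial
  simp at this

end Aux

/-- A connected simple graph has exactly one trivial distance ideal (i.e. its second
distance ideal is proper) iff it does not contain the pattern `F₆`. -/
theorem second_ideal_proper_iff_no_pattern_F6 {V : Type*} [Fintype V] [DecidableEq V]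
    (G : SimpleGraph V) (hconn : G.Connected) (hcard : 1 < Fintype.card V) :
    minorsIdeal (graphDX G) 2 ≠ ⊤ ↔
      ¬ ∃ u v w z : V,
        u ≠ v ∧ u ≠ w ∧ u ≠ z ∧ v ≠ w ∧ v ≠ z ∧ w ≠ z ∧
        G.Adj u w ∧ G.Adj w z ∧ G.Adj z v ∧ ¬ G.Adj u v := by
  constructor
  · -- pattern present ⇒ ideal is everything
    intro hne hpat
    apply hne
    obtain ⟨u, v, w, z, huv, huw, huz, hvw, hvz, hwz, auw, awz, azv, nuv⟩ := hpat
    -- distance from u to v is 2 or 3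
    have hd3 : G.dist u v ≤ 3 := by
      have := SimpleGraph.dist_le (auw.toWalk.append (awz.toWalk.append azv.toWalk))
      simpa using this
    have hd0 : G.dist u v ≠ 0 := (hconn.dist_eq_zero_iff).ne.mpr huv
    have hd1 : G.dist u v ≠ 1 := fun h => nuv (SimpleGraph.dist_eq_one_iff_adj.mp h)
    have h23 : G.dist u v = 2 ∨ G.dist u v = 3 := by omega
    rcases h23 with h2 | h3
    · -- minor with rows u,z and columns w,v equals C(-1)
      have hmem := minor_mem (G := G) u z w v huz (Ne.symm hvw)
      rw [minor_det (G := G) u z w v huw huv (Ne.symm hwz) (Ne.symm hvz),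
        SimpleGraph.dist_eq_one_iff_adj.mpr auw, SimpleGraph.dist_eq_one_iff_adj.mpr azv,
        SimpleGraph.dist_eq_one_iff_adj.mpr awz.symm, h2] at hmem
      norm_num at hmem
      exact (Ideal.eq_top_iff_one _).mpr hmem
    · -- minor with rows u,w and columns z,v equals C(1) = 1
      have hduz : G.dist u z = 2 := by
        have hle : G.dist u z ≤ 2 := by
          have := SimpleGraph.dist_le (auw.toWalk.append awz.toWalk)
          simpa using this
        have h0 : G.dist u z ≠ 0 := (hconn.dist_eq_zero_iff).ne.mpr huz
        have h1 : G.dist u z ≠ 1 := by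
          intro h
          have : G.dist u v ≤ 2 := by
            have := SimpleGraph.dist_le
              ((SimpleGraph.dist_eq_one_iff_adj.mp h).toWalk.append azv.toWalk)
            simpa using this
          omega
        omega
      have hdwv : G.dist w v = 2 := by
        have hle : G.dist w v ≤ 2 := by
          have := SimpleGraph.dist_le (awz.toWalk.append azv.toWalk)
          simpa using this
        have h0 : G.dist w v ≠ 0 := (hconn.dist_eq_zero_iff).ne.mpr (Ne.symm hvw)
        have h1 : G.dist w v ≠ 1 := by
          intro h
          have : G.dist u v ≤ 2 := by
            have := SimpleGraph.dist_le
              (auw.toWalk.append (SimpleGraph.dist_eq_one_iff_adj.mp h).toWalk)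
            simpa using this
          omega
        omega
      have hmem := minor_mem (G := G) u w z v huw (Ne.symm hvz)
      rw [minor_det (G := G) u w z v huz huv hwz (Ne.symm hvw),
        hduz, hdwv, h3, SimpleGraph.dist_eq_one_iff_adj.mpr awz] at hmem
      norm_num at hmem
      exact (Ideal.eq_top_iff_one _).mpr hmem
  · -- no pattern ⇒ ideal is proper
    intro hnp
    have hnp' : ¬ HasF6 G := hnp
    by_cases hcomp : ∀ u v : V, u ≠ v → G.Adj u v
    · -- complete graph: evaluate all variables at 1, matrix becomes all-ones
      refine rank1_ne_top (eval (fun _ => (1 : ℤ))) (fun _ => 1) (fun _ => 1) ?_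
      intro u v
      by_cases h : u = v
      · subst h; simp [graphDX]
      · simp [graphDX, h, SimpleGraph.dist_eq_one_iff_adj.mpr (hcomp u v h)]
    · -- complete bipartite: evaluate variables at 2 and reduce mod 3
      push_neg at hcomp
      obtain ⟨a, b, hne, hab⟩ := hcomp
      classical
      have hchar := bip_char hnp' hconn hab hne
      set ε : V → ZMod 3 := fun v => if G.Adj a v then 1 else -1 with hε
      have hsq : ∀ v, ε v * ε v = 1 := by
        intro v; by_cases h : G.Adj a v <;> simp [hε, h]
      refine rank1_ne_top (eval₂Hom (Int.castRingHom (ZMod 3)) (fun _ => 2))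
        (fun u => - ε u) ε ?_
      intro u v
      by_cases h : u = v
      · subst h
        have hx : graphDX G u u = X u := by simp [graphDX]
        rw [hx, eval₂Hom_X', neg_mul, hsq u]
        decide
      · by_cases hadj : G.Adj u v
        · have hd : G.dist u v = 1 := SimpleGraph.dist_eq_one_iff_adj.mpr hadj
          have hdiff : ¬ (G.Adj a u ↔ G.Adj a v) := (hchar u v).mp hadj
          have hx : graphDX G u v = C ((G.dist u v : ℤ)) := by simp [graphDX, h]
          rw [hx, hd, eval₂Hom_C]
          by_cases h1 : G.Adj a u
          · have h2 : ¬ G.Adj a v := fun h' => hdiff ⟨fun _ => h', fun _ => h1⟩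
            simp [hε, h1, h2]
          · have h2 : G.Adj a v := by
              by_contra h2
              exact hdiff ⟨fun h' => absurd h' h1, fun h' => absurd h' h2⟩
            simp [hε, h1, h2]
        · have hd : G.dist u v = 2 := by
            obtain ⟨p⟩ := hconn.preconnected u v
            rcases adj_or_mid hnp' p h with h' | ⟨m, hum, hmv⟩
            · exact absurd h' hadj
            have hle : G.dist u v ≤ 2 := by
              have := SimpleGraph.dist_le (hum.toWalk.append hmv.toWalk)
              simpa using this
            have h0 : G.dist u v ≠ 0 := (hconn.dist_eq_zero_iff).ne.mpr h
            have h1 : G.dist u v ≠ 1 := fun h' =>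
              hadj (SimpleGraph.dist_eq_one_iff_adj.mp h')
            omega
          have hsame : G.Adj a u ↔ G.Adj a v := by
            by_contra h'
            exact hadj ((hchar u v).mpr h')
          have hx : graphDX G u v = C ((G.dist u v : ℤ)) := by simp [graphDX, h]
          rw [hx, hd, eval₂Hom_C]
          by_cases h1 : G.Adj a u
          · have h2 : G.Adj a v := hsame.mp h1
            simp [hε, h1, h2]; decide
          · have h2 : ¬ G.Adj a v := fun h' => h1 (hsame.mpr h')
            simp [hε, h1, h2]; decide
end
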